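/- arXiv:2212.03643 — 2 statements merged into one kernel-verified Lean document; each statement's English description precedes it below -/
import Mathlib

section
/- Let V be a self-dual finite-dimensional module for a semisimple algebraic group G with maximal torus T, with highest weight λ, and fix a simple root α_i with maximum α_i-level e = e_i(λ). For 0 ≤ j ≤ e let V^j be the sum of weight spaces V_μ over weights μ of α_i-level j. Then for all 0 ≤ j ≤ ⌊e/2⌋, V^{e−j} is isomorphic to the dual (V^j)* as a module for the derived subgroup of the Levi L_i. -/
open Module

/-- The weight space of a character `χ : T →* kˣ` of a subgroup `T ≤ G` in a
representation `ρ` of `G`. -/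
def wSpace {k G V : Type*} [Field k] [Group G] [AddCommGroup V] [Module k V]
    (ρ : Representation k G V) (T : Subgroup G) (χ : ↥T →* kˣ) : Submodule k V where
  carrier := {v | ∀ t : T, ρ (t : G) v = (χ t : k) • v}
  add_mem' := by
    intro a b ha hb t
    simp [map_add, ha t, hb t, smul_add]
  zero_mem' := by intro t; simp
  smul_mem' := by
    intro c v hv t
    simp only [map_smul, hv t]
    rw [smul_comm]

/-- `V^j`: the sum of the weight spaces of `V` whose weight `λ − Σ c_r α_r` has
`α_i`-level `c_i = j`. -/
def levelSpace {k G V : Type*} [Field k] [Group G] [AddCommGroup V] [Module k V]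
    (ρ : Representation k G V) (T : Subgroup G) {ℓ : ℕ}
    (lam : ↥T →* kˣ) (α : Fin ℓ → (↥T →* kˣ)) (i : Fin ℓ) (j : ℕ) : Submodule k V :=
  ⨆ (c : Fin ℓ → ℕ) (_ : c i = j), wSpace ρ T (lam * (∏ r, (α r) ^ (c r))⁻¹)

/-! By `G`-invariance of `B`, the weight spaces `V_μ` and `V_μ'` are orthogonal unless
`μ + μ' = 0`. Writing weights as `λ - Σ c_r α_r`, the lowest weight `-λ = λ - Σ cmax_r α_r`
turns `μ + μ' = 0` into `c + c' = cmax` by linear independence of the simple roots, so the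
`α_i`-levels of paired weights add up to `e`. Hence `V^a ⊥ V^b` unless `a + b = e`; since the
`V^b` span `V`, the nondegenerate form restricts to a perfect pairing of `V^{e-j}` with `V^j`,
which is `H`-invariant because `B` is `G`-invariant. -/

open Function

section Orthogonality

variable {R M N P : Type*} [CommRing R] [AddCommGroup M] [Module R M] [AddCommGroup N]
  [Module R N] [AddCommGroup P] [Module R P]

theorem LinearMap.apply_eq_zero_of_mem_iSup₂_right {ι : Sort*} {κ : ι → Sort*}
    (B : M →ₗ[R] N →ₗ[R] P) {p : Submodule R M} {q : (a : ι) → κ a → Submodule R N}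
    (h : ∀ a b, ∀ v ∈ p, ∀ w ∈ q a b, B v w = 0) :
    ∀ v ∈ p, ∀ w ∈ ⨆ a, ⨆ b, q a b, B v w = 0 := fun v hv _ hw =>
  (iSup₂_le (fun a b u hu => h a b v hv u hu) : _ ≤ LinearMap.ker (B v)) hw

theorem LinearMap.apply_eq_zero_of_mem_iSup₂_left {ι : Sort*} {κ : ι → Sort*}
    (B : M →ₗ[R] N →ₗ[R] P) {p : (a : ι) → κ a → Submodule R M} {q : Submodule R N}
    (h : ∀ a b, ∀ v ∈ p a b, ∀ w ∈ q, B v w = 0) :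
    ∀ v ∈ ⨆ a, ⨆ b, p a b, ∀ w ∈ q, B v w = 0 := fun v hv w hw =>
  B.flip.apply_eq_zero_of_mem_iSup₂_right (fun a b w' hw' v' hv' => h a b v' hv' w' hw')
    w hw v hv

theorem LinearMap.injective_compl₁₂_subtype_of_sup_eq_top {B : M →ₗ[R] N →ₗ[R] P}
    (hB : B.SeparatingLeft) {p : Submodule R M} {q r : Submodule R N} (hqr : q ⊔ r = ⊤)
    (hpr : ∀ v ∈ p, ∀ w ∈ r, B v w = 0) : Injective (B.compl₁₂ p.subtype q.subtype) := by
  rw [← LinearMap.ker_eq_bot, LinearMap.ker_eq_bot']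
  intro v hv
  have hq : q ≤ LinearMap.ker (B v) := fun w hw => LinearMap.congr_fun hv ⟨w, hw⟩
  have hr : r ≤ LinearMap.ker (B v) := fun w hw => hpr v v.2 w hw
  have hzero : B v = 0 := LinearMap.ker_eq_top.mp (top_le_iff.mp (hqr ▸ sup_le hq hr))
  exact Subtype.ext (LinearMap.separatingLeft_iff_linear_nontrivial.mp hB v hzero)

end Orthogonality

theorem exponents_add_eq_of_mul_eq_one {A : Type*} [CommGroup A] {ℓ : ℕ} {lam : A}
    {α : Fin ℓ → A}
    (hα : ∀ a b : Fin ℓ → ℤ, (∏ r, (α r) ^ (a r)) = (∏ r, (α r) ^ (b r)) → a = b)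
    {cmax c c' : Fin ℓ → ℕ} (hlow : lam * (∏ r, (α r) ^ (cmax r))⁻¹ = lam⁻¹)
    (h : (lam * (∏ r, (α r) ^ (c r))⁻¹) * (lam * (∏ r, (α r) ^ (c' r))⁻¹) = 1) :
    c + c' = cmax := by
  have hsq : lam * lam = ∏ r, (α r) ^ (cmax r) :=
    eq_inv_mul_iff_mul_eq.mp (mul_inv_eq_iff_eq_mul.mp hlow)
  have hsq' : lam * lam = ∏ r, (α r) ^ (c r + c' r) := by
    rw [mul_mul_mul_comm, ← mul_inv, mul_inv_eq_one] at h
    simp only [h, pow_add, Finset.prod_mul_distrib]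
  have hz : ∏ r, (α r) ^ (((c + c') r : ℕ) : ℤ) = ∏ r, (α r) ^ ((cmax r : ℕ) : ℤ) := by
    simp only [zpow_natCast, Pi.add_apply, ← hsq, hsq']
  funext r
  exact_mod_cast congrFun (hα _ _ hz) r

section LevelSpaces

variable {k G V : Type*} [Field k] [Group G] [AddCommGroup V] [Module k V]
  {ρ : Representation k G V} {T : Subgroup G} {ℓ : ℕ} {lam : ↥T →* kˣ} {α : Fin ℓ → (↥T →* kˣ)}
  {i : Fin ℓ} {B : LinearMap.BilinForm k V}

theorem apply_eq_zero_of_mem_wSpace (hGinv : ∀ (g : G) (v w : V), B (ρ g v) (ρ g w) = B v w)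
    {χ χ' : ↥T →* kˣ} (hχ : χ * χ' ≠ 1) {v w : V} (hv : v ∈ wSpace ρ T χ)
    (hw : w ∈ wSpace ρ T χ') : B v w = 0 := by
  obtain ⟨t, ht⟩ : ∃ t : ↥T, (χ * χ') t ≠ 1 := by
    by_contra! h
    exact hχ (MonoidHom.ext h)
  have hscale : B v w = ((χ * χ') t : k) * B v w := by
    conv_lhs => rw [← hGinv (t : G) v w, hv t, hw t]
    simp only [map_smul, LinearMap.smul_apply, smul_eq_mul, MonoidHom.mul_apply, Units.val_mul]
    ring
  by_contra hne
  exact ht (Units.ext ((mul_eq_right₀ hne).mp hscale.symm))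

theorem levelSpace_apply_eq_zero (hGinv : ∀ (g : G) (v w : V), B (ρ g v) (ρ g w) = B v w)
    (hα : ∀ a b : Fin ℓ → ℤ, (∏ r, (α r) ^ (a r)) = (∏ r, (α r) ^ (b r)) → a = b)
    {cmax : Fin ℓ → ℕ} (hlow : lam * (∏ r, (α r) ^ (cmax r))⁻¹ = lam⁻¹) {j₁ j₂ : ℕ}
    (hj : j₁ + j₂ ≠ cmax i) :
    ∀ v ∈ levelSpace ρ T lam α i j₁, ∀ w ∈ levelSpace ρ T lam α i j₂, B v w = 0 :=
  B.apply_eq_zero_of_mem_iSup₂_left fun _ hc => B.apply_eq_zero_of_mem_iSup₂_right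
    fun _ hc' _ hv _ hw => apply_eq_zero_of_mem_wSpace hGinv
      (fun h => hj (hc ▸ hc' ▸ congrFun (exponents_add_eq_of_mul_eq_one hα hlow h) i)) hv hw

theorem iSup_levelSpace_eq_top
    (hdecomp : (⨆ c : Fin ℓ → ℕ, wSpace ρ T (lam * (∏ r, (α r) ^ (c r))⁻¹)) = ⊤) :
    ⨆ j, levelSpace ρ T lam α i j = ⊤ := by
  refine eq_top_iff.mpr (hdecomp ▸ iSup_le fun c => ?_)
  exact le_iSup_of_le (c i) (le_iSup₂_of_le (f := fun (c' : Fin ℓ → ℕ) (_ : c' i = c i) =>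
    wSpace ρ T (lam * (∏ r, (α r) ^ (c' r))⁻¹)) c rfl le_rfl)

theorem injective_levelSpace_pairing (hB : B.SeparatingLeft)
    (hGinv : ∀ (g : G) (v w : V), B (ρ g v) (ρ g w) = B v w)
    (hα : ∀ a b : Fin ℓ → ℤ, (∏ r, (α r) ^ (a r)) = (∏ r, (α r) ^ (b r)) → a = b)
    {cmax : Fin ℓ → ℕ} (hlow : lam * (∏ r, (α r) ^ (cmax r))⁻¹ = lam⁻¹)
    (hdecomp : (⨆ c : Fin ℓ → ℕ, wSpace ρ T (lam * (∏ r, (α r) ^ (c r))⁻¹)) = ⊤)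
    {j₁ j₂ : ℕ} (hj : j₁ + j₂ = cmax i) :
    Injective (B.compl₁₂ (levelSpace ρ T lam α i j₁).subtype
      (levelSpace ρ T lam α i j₂).subtype) := by
  refine B.injective_compl₁₂_subtype_of_sup_eq_top hB
    (r := ⨆ (j) (_ : j ≠ j₂), levelSpace ρ T lam α i j) ?_
    (B.apply_eq_zero_of_mem_iSup₂_right fun j (hj₂ : j ≠ j₂) =>
      levelSpace_apply_eq_zero hGinv hα hlow (by omega))
  rw [← iSup_split_single, iSup_levelSpace_eq_top hdecomp]

theorem levelSpace_isPerfPair [FiniteDimensional k V] (hB : B.Nondegenerate)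
    (hGinv : ∀ (g : G) (v w : V), B (ρ g v) (ρ g w) = B v w)
    (hα : ∀ a b : Fin ℓ → ℤ, (∏ r, (α r) ^ (a r)) = (∏ r, (α r) ^ (b r)) → a = b)
    {cmax : Fin ℓ → ℕ} (hlow : lam * (∏ r, (α r) ^ (cmax r))⁻¹ = lam⁻¹)
    (hdecomp : (⨆ c : Fin ℓ → ℕ, wSpace ρ T (lam * (∏ r, (α r) ^ (c r))⁻¹)) = ⊤)
    {j₁ j₂ : ℕ} (hj : j₁ + j₂ = cmax i) :
    (B.compl₁₂ (levelSpace ρ T lam α i j₁).subtype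
      (levelSpace ρ T lam α i j₂).subtype).IsPerfPair :=
  .of_injective (injective_levelSpace_pairing hB.1 hGinv hα hlow hdecomp hj)
    (injective_levelSpace_pairing (B := B.flip) (LinearMap.flip_separatingLeft.mpr hB.2)
      (fun g v w => hGinv g w v) hα hlow hdecomp (by omega))

end LevelSpaces

theorem stmt8_general {k : Type*} [Field k]
    {G : Type*} [Group G] {V : Type*} [AddCommGroup V] [Module k V] [FiniteDimensional k V]
    (ρ : Representation k G V) (T H : Subgroup G)
    (ℓ : ℕ) (lam : ↥T →* kˣ) (α : Fin ℓ → (↥T →* kˣ))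
    (hαindep : ∀ a b : Fin ℓ → ℤ, (∏ r, (α r) ^ (a r)) = (∏ r, (α r) ^ (b r)) → a = b)
    (i : Fin ℓ) (e : ℕ)
    (hdecomp : (⨆ c : Fin ℓ → ℕ, wSpace ρ T (lam * (∏ r, (α r) ^ (c r))⁻¹)) = ⊤)
    (hlow : ∃ cmax : Fin ℓ → ℕ, cmax i = e ∧
      lam * (∏ r, (α r) ^ (cmax r))⁻¹ = lam⁻¹ ∧
      wSpace ρ T (lam * (∏ r, (α r) ^ (cmax r))⁻¹) ≠ ⊥)
    (B : LinearMap.BilinForm k V) (hB : B.Nondegenerate)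
    (hGinv : ∀ (g : G) (v w : V), B (ρ g v) (ρ g w) = B v w) :
    ∀ j : ℕ, j ≤ e / 2 →
      ∃ φ : ↥(levelSpace ρ T lam α i (e - j)) ≃ₗ[k]
          Module.Dual k ↥(levelSpace ρ T lam α i j),
        ∀ (g : ↥H) (v : ↥(levelSpace ρ T lam α i (e - j)))
          (w : ↥(levelSpace ρ T lam α i j))
          (hv : ρ (g : G) (v : V) ∈ levelSpace ρ T lam α i (e - j))
          (hw : ρ (g : G) (w : V) ∈ levelSpace ρ T lam α i j),
          φ ⟨ρ (g : G) (v : V), hv⟩ ⟨ρ (g : G) (w : V), hw⟩ = φ v w := by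
  intro j hj
  obtain ⟨cmax, rfl, hcmax, -⟩ := hlow
  have := levelSpace_isPerfPair hB hGinv hαindep hcmax hdecomp (i := i) (j₁ := cmax i - j)
    (j₂ := j) (by omega)
  exact ⟨LinearMap.toPerfPair (B.compl₁₂ (Submodule.subtype _) (Submodule.subtype _)),
    fun g v w _ _ => hGinv g v w⟩

/-- Let `V` be a self-dual finite-dimensional module of highest weight
`λ` for a semisimple group `G` with maximal torus `T`, fix a simple root `α_i`, and let
`e = e_i(λ)` be the maximum `α_i`-level of weights of `V` (attained at the lowest weight
`w₀(λ) = −λ`).  Let `V^j` be the sum of weight spaces of `α_i`-level `j`, each `V^j`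
being stable under the subgroup `H = [L_i, L_i]`.  Then for all `0 ≤ j ≤ ⌊e/2⌋`, the
module `V^{e−j}` is isomorphic to the dual `(V^j)*` as an `H`-module. -/
theorem stmt8 {k : Type*} [Field k] [IsAlgClosed k]
    {G : Type*} [Group G] {V : Type*} [AddCommGroup V] [Module k V] [FiniteDimensional k V]
    (ρ : Representation k G V) (T H : Subgroup G)
    (ℓ : ℕ) (lam : ↥T →* kˣ) (α : Fin ℓ → (↥T →* kˣ))
    (hαindep : ∀ a b : Fin ℓ → ℤ, (∏ r, (α r) ^ (a r)) = (∏ r, (α r) ^ (b r)) → a = b)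
    (i : Fin ℓ) (e : ℕ)
    (hdecomp : (⨆ c : Fin ℓ → ℕ, wSpace ρ T (lam * (∏ r, (α r) ^ (c r))⁻¹)) = ⊤)
    (hmax : ∀ c : Fin ℓ → ℕ, wSpace ρ T (lam * (∏ r, (α r) ^ (c r))⁻¹) ≠ ⊥ → c i ≤ e)
    (hlow : ∃ cmax : Fin ℓ → ℕ, cmax i = e ∧
      lam * (∏ r, (α r) ^ (cmax r))⁻¹ = lam⁻¹ ∧
      wSpace ρ T (lam * (∏ r, (α r) ^ (cmax r))⁻¹) ≠ ⊥)
    (B : LinearMap.BilinForm k V) (hB : B.Nondegenerate)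
    (hGinv : ∀ (g : G) (v w : V), B (ρ g v) (ρ g w) = B v w)
    (hHstab : ∀ g ∈ H, ∀ (j : ℕ), ∀ v ∈ levelSpace ρ T lam α i j,
      ρ g v ∈ levelSpace ρ T lam α i j) :
    ∀ j : ℕ, j ≤ e / 2 →
      ∃ φ : ↥(levelSpace ρ T lam α i (e - j)) ≃ₗ[k]
          Module.Dual k ↥(levelSpace ρ T lam α i j),
        ∀ (g : ↥H) (v : ↥(levelSpace ρ T lam α i (e - j)))
          (w : ↥(levelSpace ρ T lam α i j))
          (hv : ρ (g : G) (v : V) ∈ levelSpace ρ T lam α i (e - j))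
          (hw : ρ (g : G) (w : V) ∈ levelSpace ρ T lam α i j),
          φ ⟨ρ (g : G) (v : V), hv⟩ ⟨ρ (g : G) (w : V), hw⟩ = φ v w :=
  stmt8_general ρ T H ℓ lam α hαindep i e hdecomp hlow B hB hGinv
end

section
/- Let s = diag(μ₁·I_{n₁},…,μ_m·I_{n_m}, μ_m^{-1}·I_{n_m},…,μ₁^{-1}·I_{n₁}) be a noncentral element of Sp_{2ℓ}(k) (ℓ ≥ 2, k algebraically closed, char k ≠ 2) with μ_i ≠ μ_j^{±1} for i < j and Σ n_i = ℓ. Then every eigenspace of s on the symmetric square Sym²(k^{2ℓ}) (the irreducible module L(2ω₁) for Sp_{2ℓ} when char k ≠ 2) has dimension at most 2ℓ² − 3ℓ + 4, and equality for an eigenvalue μ with μ = μ^{-1} forces (up to conjugation and for ℓ ≥ 3) s = ±diag(1,…,1,−1,−1,1,…,1) with eigenvalue 1. -/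
open TensorProduct

/-- The symmetric square of `W`, realised (for `char k ≠ 2`) as the submodule of `W ⊗ W`
spanned by the squares `x ⊗ x`. -/
noncomputable def symSq (k W : Type*) [Field k] [AddCommGroup W] [Module k W] :
    Submodule k (W ⊗[k] W) :=
  Submodule.span k {z | ∃ x : W, z = x ⊗ₜ[k] x}

/-!
In the eigenbasis `b ⊗ b` of `s ⊗ s`, a vector of `Sym²` is a symmetric coefficient matrix,
and it lies in the `μ₀`-eigenspace iff it is supported on the pairs `(x, y)` with
`a x * a y = μ₀`; so the eigenspace has dimension `T`, the number of such pairs with `x ≤ y`.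
Counting ordered pairs, `2T = S + D`, where `D ≤ 2ℓ` counts the diagonal ones and, `m` being
the multiplicity function of the (nonzero) eigenvalues, `S = ∑ m(v) m(μ₀/v) ≤ ∑ m(v)²` by
AM–GM. The eigenvalues are closed under inversion, self-inverse ones having even multiplicity,
and `s` is not scalar, so every multiplicity is at most `2ℓ - 2`; hence
`∑ m(v)² ≤ (2ℓ - 2)² + 4` and `2T ≤ (2ℓ - 2)² + 4 + 2ℓ = 2 (2ℓ² - 3ℓ + 4)`.

In the equality case `D = 2ℓ`, so every eigenvalue squares to `μ₀`: the eigenvalues are `ε`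
and `-ε`, with multiplicities `2ℓ - 2` and `2`. As `ε⁻¹` is an eigenvalue of the same
multiplicity as `ε`, and `2ℓ - 2 ≠ 2` for `ℓ ≥ 3`, we get `ε⁻¹ = ε`, whence `ε = ±1` and
`μ₀ = ε² = 1`.
-/

open Module Finset

section SymmetricSquare

variable {k W : Type*} [Field k] [AddCommGroup W] [Module k W]

theorem tmul_add_tmul_mem_symSq (x y : W) : x ⊗ₜ[k] y + y ⊗ₜ[k] x ∈ symSq k W := by
  have hxy : x ⊗ₜ[k] y + y ⊗ₜ[k] x = (x + y) ⊗ₜ (x + y) - x ⊗ₜ x - y ⊗ₜ y := by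
    simp only [add_tmul, tmul_add]; abel
  rw [hxy]
  exact sub_mem (sub_mem (Submodule.subset_span ⟨_, rfl⟩) (Submodule.subset_span ⟨_, rfl⟩))
    (Submodule.subset_span ⟨_, rfl⟩)

theorem self_add_comm_mem_symSq (z : W ⊗[k] W) :
    z + TensorProduct.comm k W W z ∈ symSq k W := by
  induction z using TensorProduct.induction_on with
  | zero => simp
  | tmul x y => exact tmul_add_tmul_mem_symSq x y
  | add z w hz hw =>
    rw [map_add, add_add_add_comm]
    exact add_mem hz hw

theorem mem_symSq_iff_comm_eq (hk2 : (2 : k) ≠ 0) (z : W ⊗[k] W) :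
    z ∈ symSq k W ↔ TensorProduct.comm k W W z = z := by
  constructor
  · intro hz
    induction hz using Submodule.span_induction with
    | mem _ h => obtain ⟨x, rfl⟩ := h; exact comm_tmul k W W x x
    | zero => exact map_zero _
    | add _ _ _ _ hx hy => rw [map_add, hx, hy]
    | smul c _ _ hx => rw [map_smul, hx]
  · intro hz
    have hhalf : z = (2 : k)⁻¹ • (z + TensorProduct.comm k W W z) := by
      rw [hz, ← two_smul k z, smul_smul, inv_mul_cancel₀ hk2, one_smul]
    rw [hhalf]
    exact Submodule.smul_mem _ _ (self_add_comm_mem_symSq z)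

end SymmetricSquare

theorem LinearMap.BilinForm.Nondegenerate.injective_of_isometry {R M : Type*} [CommRing R]
    [AddCommGroup M] [Module R M] {B : LinearMap.BilinForm R M} (hB : B.Nondegenerate)
    {s : M →ₗ[R] M} (hs : ∀ v w, B (s v) (s w) = B v w) : Function.Injective s :=
  (injective_iff_map_eq_zero s).2 fun v hv =>
    hB.1 v fun w => by rw [← hs, hv, map_zero, LinearMap.zero_apply]

namespace Module.Basis

variable {R M N ι κ : Type*} [CommSemiring R] [AddCommMonoid M] [Module R M]
  [AddCommMonoid N] [Module R N] (b : Basis ι R M) (c : Basis κ R N)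

theorem tensorProduct_repr_comm (z : M ⊗[R] N) (i : ι) (j : κ) :
    (c.tensorProduct b).repr (TensorProduct.comm R M N z) (j, i) =
      (b.tensorProduct c).repr z (i, j) := by
  induction z using TensorProduct.induction_on with
  | zero => simp
  | tmul x y => simp [mul_comm]
  | add z w hz hw => simp [hz, hw]

theorem repr_apply_of_apply_eq_smul {s : M →ₗ[R] M} {a : ι → R}
    (hs : ∀ i, s (b i) = a i • b i) (x : M) (i : ι) : b.repr (s x) i = a i * b.repr x i := by
  have hlin : Finsupp.lapply i ∘ₗ b.repr.toLinearMap ∘ₗ s =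
      a i • (Finsupp.lapply i ∘ₗ b.repr.toLinearMap) := by
    refine b.ext fun j => ?_
    simp only [LinearMap.comp_apply, LinearEquiv.coe_coe, hs, map_smul, repr_self,
      LinearMap.smul_apply, Finsupp.lapply_apply, smul_eq_mul]
    rcases eq_or_ne j i with rfl | hji
    · rfl
    · simp [hji]
  exact LinearMap.congr_fun hlin x

theorem tensorProduct_repr_map {s : M →ₗ[R] M} {t : N →ₗ[R] N} {a : ι → R} {d : κ → R}
    (hs : ∀ i, s (b i) = a i • b i) (ht : ∀ j, t (c j) = d j • c j) (z : M ⊗[R] N)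
    (i : ι) (j : κ) :
    (b.tensorProduct c).repr (TensorProduct.map s t z) (i, j) =
      a i * d j * (b.tensorProduct c).repr z (i, j) := by
  induction z using TensorProduct.induction_on with
  | zero => simp
  | tmul x y =>
    simp only [map_tmul, tensorProduct_repr_tmul_apply, repr_apply_of_apply_eq_smul b hs,
      repr_apply_of_apply_eq_smul c ht, smul_eq_mul]
    ring
  | add z w hz hw => simp only [map_add, Finsupp.add_apply, hz, hw, mul_add]

theorem exists_apply_ne_of_ne_smul_id {s : M →ₗ[R] M} {a : ι → R}
    (hb : ∀ x, s (b x) = a x • b x) (hs : ∀ c : R, s ≠ c • LinearMap.id) (c : R) :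
    ∃ x, a x ≠ c := by
  by_contra! h
  exact hs c (b.ext fun x => by simp [hb, h x])

end Module.Basis

section SymmetricFunctions

variable {k ι : Type*} [Field k] [Fintype ι] [LinearOrder ι]

theorem finrank_eq_card_of_mem_iff_symmetric {P : ι × ι → Prop} [DecidablePred P]
    (hP : ∀ p, P p.swap ↔ P p) (V : Submodule k (ι × ι → k))
    (hV : ∀ c, c ∈ V ↔ (∀ p, c p.swap = c p) ∧ ∀ p, ¬ P p → c p = 0) :
    finrank k V = #{p : ι × ι | p.1 ≤ p.2 ∧ P p} := by
  -- A symmetric function is determined by its values on the pairs with `p.1 ≤ p.2`.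
  let sort : ι × ι → ι × ι := fun p => (min p.1 p.2, max p.1 p.2)
  have sort_swap (p : ι × ι) : sort p.swap = sort p := Prod.ext (min_comm _ _) (max_comm _ _)
  have sort_eq (p : ι × ι) : sort p = p ∨ sort p = p.swap := by
    rcases le_total p.1 p.2 with h | h
    · exact .inl (Prod.ext (min_eq_left h) (max_eq_right h))
    · exact .inr (Prod.ext (min_eq_right h) (max_eq_left h))
  have hsort (p : ι × ι) (hp : P p) : (sort p).1 ≤ (sort p).2 ∧ P (sort p) :=
    ⟨min_le_max, by rcases sort_eq p with h | h <;> rw [h] <;> simpa [hP] using hp⟩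
  let extend (f : {p : ι × ι // p.1 ≤ p.2 ∧ P p} → k) (p : ι × ι) : k :=
    if hp : P p then f ⟨sort p, hsort p hp⟩ else 0
  have extend_mem (f) : extend f ∈ V := by
    refine (hV _).2 ⟨fun p => ?_, fun p hp => dif_neg hp⟩
    by_cases hp : P p
    · simp only [extend, dif_pos hp, dif_pos ((hP p).2 hp), sort_swap]
    · simp only [extend, dif_neg hp, dif_neg (mt (hP p).1 hp)]
  let e : V ≃ₗ[k] ({p : ι × ι // p.1 ≤ p.2 ∧ P p} → k) :=
    { toFun c t := c.1 t.1
      map_add' _ _ := rfl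
      map_smul' _ _ := rfl
      invFun f := ⟨extend f, extend_mem f⟩
      left_inv c := by
        obtain ⟨hsymm, hsupp⟩ := (hV c.1).1 c.2
        refine Subtype.ext (funext fun p => ?_)
        by_cases hp : P p
        · simp only [extend, dif_pos hp]
          rcases sort_eq p with h | h <;> simp only [h, hsymm]
        · simp only [extend, dif_neg hp, hsupp p hp]
      right_inv f := by
        refine funext fun t => ?_
        have ht : sort t.1 = t.1 := Prod.ext (min_eq_left t.2.1) (max_eq_right t.2.1)
        simp only [extend, dif_pos t.2.2, ht] }
  rw [e.finrank_eq, finrank_fintype_fun_eq_card, Fintype.card_subtype]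

end SymmetricFunctions

theorem finrank_eigenspace_map_inf_symSq {k W ι : Type*} [Field k] [AddCommGroup W]
    [Module k W] [DecidableEq k] [Fintype ι] [LinearOrder ι] (hk2 : (2 : k) ≠ 0)
    (b : Basis ι k W) (s : W →ₗ[k] W) (a : ι → k) (hb : ∀ x, s (b x) = a x • b x) (μ0 : k) :
    finrank k ↥(End.eigenspace (TensorProduct.map s s) μ0 ⊓ symSq k W) =
      #{p : ι × ι | p.1 ≤ p.2 ∧ a p.1 * a p.2 = μ0} := by
  let b2 := b.tensorProduct b
  rw [← (b2.equivFun).finrank_map_eq]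
  refine finrank_eq_card_of_mem_iff_symmetric (P := fun p => a p.1 * a p.2 = μ0)
    (fun p => by rw [Prod.fst_swap, Prod.snd_swap, mul_comm]) _ fun c => ?_
  obtain ⟨z, rfl⟩ := b2.equivFun.surjective c
  rw [Submodule.mem_map_equiv, LinearEquiv.symm_apply_apply, Submodule.mem_inf,
    End.mem_eigenspace_iff, mem_symSq_iff_comm_eq hk2, and_comm, ← b2.repr.injective.eq_iff,
    ← b2.repr.injective.eq_iff (a := TensorProduct.map s s z), Finsupp.ext_iff, Finsupp.ext_iff,
    Basis.equivFun_apply]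
  refine and_congr (forall_congr' fun ⟨i, j⟩ => ?_) (forall_congr' fun ⟨i, j⟩ => ?_)
  · rw [b.tensorProduct_repr_comm b]
    rfl
  · rw [map_smul, Finsupp.smul_apply, smul_eq_mul, b.tensorProduct_repr_map b hb hb,
      mul_eq_mul_right_iff, or_iff_not_imp_left]

theorem Nat.sq_two_mul_sub_two_add_four_add_two_mul {ℓ : ℕ} (hl : 2 ≤ ℓ) :
    (2 * ℓ - 2) ^ 2 + 4 + 2 * ℓ = 2 * (2 * ℓ ^ 2 - 3 * ℓ + 4) := by
  obtain ⟨j, rfl⟩ := Nat.exists_eq_add_of_le hl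
  have h3 : 3 * (2 + j) ≤ 2 * (2 + j) ^ 2 := by nlinarith
  rw [show 2 * (2 + j) - 2 = 2 * j + 2 by omega]
  zify [h3]
  ring

theorem Nat.eq_two_or_eq_two_of_sq_add_sq_eq {p q N : ℕ} (hsum : p + q = N)
    (hsq : p ^ 2 + q ^ 2 = (N - 2) ^ 2 + 4) : p = 2 ∨ q = 2 := by
  obtain ⟨M, rfl⟩ : ∃ M, N = M + 2 := ⟨N - 2, by
    by_contra h
    have hp : p ≤ 1 := by omega
    have hq : q ≤ 1 := by omega
    interval_cases p <;> interval_cases q <;> simp at hsq⟩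
  rw [Nat.add_sub_cancel] at hsq
  have hprod : ((p : ℤ) - 2) * ((q : ℤ) - 2) = 0 := by
    have hsum' : (p : ℤ) + q = M + 2 := by exact_mod_cast hsum
    have hsq' : (p : ℤ) ^ 2 + q ^ 2 = M ^ 2 + 4 := by exact_mod_cast hsq
    nlinarith
  rcases _root_.mul_eq_zero.1 hprod with h | h
  · exact .inl (by omega)
  · exact .inr (by omega)

namespace Multiset

variable {α : Type*} [DecidableEq α]

theorem count_map_univ {ι : Type*} [Fintype ι] (a : ι → α) (v : α) :
    (univ.val.map a).count v = #{x | a x = v} := by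
  simp [count_map, Finset.card_def, Finset.filter_val, eq_comm]

theorem sum_count_le_card (A : Multiset α) (s : Finset α) : ∑ v ∈ s, A.count v ≤ card A :=
  calc ∑ v ∈ s, A.count v ≤ ∑ v ∈ s ∪ A.toFinset, A.count v :=
        sum_le_sum_of_subset subset_union_left
    _ = card A := sum_count_eq_card fun _ hv => mem_union_right _ (mem_toFinset.2 hv)

theorem sum_count_mul_count_comp_le (A : Multiset α)
    {σ : α → α} (hσ : σ.Injective) :
    ∑ v ∈ A.toFinset, A.count v * A.count (σ v) ≤ ∑ v ∈ A.toFinset, A.count v ^ 2 := by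
  have hσsq : ∑ v ∈ A.toFinset, A.count (σ v) ^ 2 ≤ ∑ v ∈ A.toFinset, A.count v ^ 2 :=
    calc ∑ v ∈ A.toFinset, A.count (σ v) ^ 2
        = ∑ w ∈ A.toFinset.image σ, A.count w ^ 2 :=
          (sum_image (f := fun w => A.count w ^ 2) hσ.injOn).symm
      _ ≤ ∑ w ∈ A.toFinset.image σ ∪ A.toFinset, A.count w ^ 2 :=
          sum_le_sum_of_subset subset_union_left
      _ = ∑ w ∈ A.toFinset, A.count w ^ 2 :=
          (sum_subset subset_union_right fun w _ hw => by simp_all).symm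
  have hamgm : 2 * ∑ v ∈ A.toFinset, A.count v * A.count (σ v) ≤
      ∑ v ∈ A.toFinset, A.count v ^ 2 + ∑ v ∈ A.toFinset, A.count (σ v) ^ 2 := by
    rw [mul_sum, ← sum_add_distrib]
    exact sum_le_sum fun v _ => (mul_assoc 2 _ _).symm.trans_le (two_mul_le_add_sq _ _)
  omega

theorem count_add_map_inv [InvolutiveInv α] (B : Multiset α) (v : α) :
    (B + B.map Inv.inv).count v = B.count v + B.count v⁻¹ := by
  rw [count_add, ← inv_inv v, count_map_eq_count' _ _ inv_injective, inv_inv]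

theorem count_inv_of_eq_add_map_inv [InvolutiveInv α] {A B : Multiset α}
    (hA : A = B + B.map Inv.inv) (v : α) : A.count v⁻¹ = A.count v := by
  rw [hA, count_add_map_inv, count_add_map_inv, inv_inv, add_comm]

theorem even_count_of_eq_add_map_inv [InvolutiveInv α] {A B : Multiset α}
    (hA : A = B + B.map Inv.inv) {v : α} (hv : v⁻¹ = v) : Even (A.count v) := by
  rw [hA, count_add_map_inv, hv]
  exact ⟨_, rfl⟩

theorem count_add_two_le_card [InvolutiveInv α] {A : Multiset α}
    (hinv : ∀ v, A.count v⁻¹ = A.count v) (heven : ∀ v, v⁻¹ = v → Even (A.count v))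
    (hne : ∀ v, ∃ w ∈ A, w ≠ v) (h4 : 4 ≤ card A) (v : α) :
    A.count v + 2 ≤ card A := by
  by_cases hv : v⁻¹ = v
  · obtain ⟨w, hwA, hwv⟩ := hne v
    have hw : 0 < A.count w := count_pos.2 hwA
    by_cases hw' : w⁻¹ = w
    · have hpair := sum_count_le_card A {v, w}
      rw [Finset.sum_pair hwv.symm] at hpair
      obtain ⟨r, hr⟩ := heven w hw'
      omega
    · have hwv' : w⁻¹ ≠ v := fun h => hwv (by rw [← inv_inv w, h, hv])
      have htriple := sum_count_le_card A {v, w, w⁻¹}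
      rw [Finset.sum_insert (by simp [hwv.symm, hwv'.symm]), Finset.sum_pair (Ne.symm hw'),
        hinv] at htriple
      omega
  · have hpair := sum_count_le_card A {v, v⁻¹}
    rw [Finset.sum_pair (Ne.symm hv), hinv] at hpair
    omega

theorem sum_count_sq_le {A : Multiset α} (hle : ∀ v, A.count v + 2 ≤ card A) :
    ∑ v ∈ A.toFinset, A.count v ^ 2 ≤ (card A - 2) ^ 2 + 4 := by
  have hsum := toFinset_sum_count_eq A
  by_cases hbig : ∃ v ∈ A.toFinset, 2 ≤ A.count v
  · obtain ⟨v, hv, h2⟩ := hbig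
    rw [← add_sum_erase _ _ hv] at hsum ⊢
    have hrest := sum_sq_le_sq_sum_of_nonneg (s := A.toFinset.erase v) (f := (A.count ·))
      fun _ _ => Nat.zero_le _
    obtain ⟨c, hc⟩ := Nat.exists_eq_add_of_le h2
    obtain ⟨d, hd⟩ := Nat.exists_eq_add_of_le (hle v)
    generalize ∑ x ∈ A.toFinset.erase v, A.count x ^ 2 = Q at hrest ⊢
    generalize ∑ x ∈ A.toFinset.erase v, A.count x = R at hrest hsum
    have hN : card A - 2 = c + d + 2 := by omega
    have hR : R = d + 2 := by omega
    rw [hN, hc]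
    rw [hR] at hrest
    nlinarith
  · simp only [not_exists, not_and, not_le] at hbig
    have hsq : ∑ v ∈ A.toFinset, A.count v ^ 2 ≤ ∑ v ∈ A.toFinset, A.count v :=
      sum_le_sum fun v hv => by
        have := hbig v hv
        interval_cases A.count v <;> simp
    rw [hsum] at hsq
    have := Nat.le_self_pow two_ne_zero (card A - 2)
    omega

theorem exists_toFinset_eq_pair_neg {R : Type*} [CommRing R] [NoZeroDivisors R] [DecidableEq R]
    {A : Multiset R} {μ0 : R} (hsq : ∀ v ∈ A, v * v = μ0)
    (hne : ∀ v, ∃ w ∈ A, w ≠ v) :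
    ∃ ε, ε ≠ -ε ∧ A.toFinset = {ε, -ε} := by
  obtain ⟨ε, hε, -⟩ := hne 0
  obtain ⟨w, hw, hwε⟩ := hne ε
  have hroots (u : R) (hu : u ∈ A) : u = ε ∨ u = -ε :=
    mul_self_eq_mul_self_iff.1 ((hsq u hu).trans (hsq ε hε).symm)
  have hwneg : w = -ε := (hroots w hw).resolve_left hwε
  refine ⟨ε, hwneg ▸ hwε.symm, Finset.ext fun u => ?_⟩
  rw [mem_toFinset, Finset.mem_insert, Finset.mem_singleton]
  exact ⟨hroots u, by rintro (rfl | rfl); exacts [hε, hwneg ▸ hw]⟩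

variable {k : Type*} [Field k] [DecidableEq k]

theorem eq_nsmul_add_nsmul_neg {A : Multiset k} {ε : k} (hinv : ∀ v, A.count v⁻¹ = A.count v)
    (hε : ε ≠ -ε) (hA : A.toFinset = {ε, -ε}) (h2 : A.count (-ε) = 2) (h6 : 6 ≤ card A) :
    ε * ε = 1 ∧ A = (card A - 2) • {ε} + 2 • {-ε} := by
  have hcount : A.count ε + A.count (-ε) = card A := by
    simpa only [hA, Finset.sum_pair hε] using toFinset_sum_count_eq A
  have hinvε : ε⁻¹ = ε := by
    have hmem : ε⁻¹ ∈ A.toFinset := mem_toFinset.2 (count_pos.1 (by rw [hinv]; omega))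
    rw [hA, Finset.mem_insert, Finset.mem_singleton] at hmem
    refine hmem.resolve_right fun h => ?_
    have := hinv ε
    rw [h, h2] at this
    omega
  have hε0 : ε ≠ 0 := fun h => hε (by rw [h, neg_zero])
  refine ⟨by nth_rewrite 2 [← hinvε]; exact mul_inv_cancel₀ hε0, ext.2 fun w => ?_⟩
  rw [count_add, count_nsmul, count_nsmul, count_singleton, count_singleton]
  by_cases hwε : w = ε
  · subst hwε
    simp only [if_pos, if_neg hε]
    omega
  by_cases hwε' : w = -ε
  · subst hwε'
    simp [hwε, h2]
  · have hw : w ∉ A.toFinset := by simp_all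
    simp [count_eq_zero.2 (mt mem_toFinset.2 hw), hwε, hwε']

theorem exists_eq_nsmul_add_nsmul_neg {A : Multiset k} {μ0 : k}
    (hinv : ∀ v, A.count v⁻¹ = A.count v) (hsq : ∀ v ∈ A, v * v = μ0)
    (hne : ∀ v, ∃ w ∈ A, w ≠ v) (h6 : 6 ≤ card A)
    (hS : ∑ v ∈ A.toFinset, A.count v ^ 2 = (card A - 2) ^ 2 + 4) :
    ∃ ε, ε * ε = 1 ∧ A = (card A - 2) • {ε} + 2 • {-ε} := by
  obtain ⟨ε, hε, hA⟩ := exists_toFinset_eq_pair_neg hsq hne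
  have hsum : A.count ε + A.count (-ε) = card A := by
    simpa only [hA, Finset.sum_pair hε] using toFinset_sum_count_eq A
  rw [hA, Finset.sum_pair hε] at hS
  rcases Nat.eq_two_or_eq_two_of_sq_add_sq_eq hsum hS with h2 | h2
  · exact ⟨-ε, eq_nsmul_add_nsmul_neg hinv (by rwa [neg_neg, ne_comm])
      (by rw [hA, neg_neg, Finset.pair_comm]) (by rwa [neg_neg]) h6⟩
  · exact ⟨ε, eq_nsmul_add_nsmul_neg hinv hε hA h2 h6⟩

end Multiset

theorem two_mul_card_filter_fst_le_snd {ι : Type*} [Fintype ι] [LinearOrder ι]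
    (r : ι → ι → Prop) [DecidableRel r] (hr : ∀ x y, r x y → r y x) :
    2 * #{p : ι × ι | p.1 ≤ p.2 ∧ r p.1 p.2} =
      #{p : ι × ι | r p.1 p.2} + #{x | r x x} := by
  classical
  set L : Finset (ι × ι) := {p : ι × ι | p.1 ≤ p.2 ∧ r p.1 p.2}
  set U : Finset (ι × ι) := {p : ι × ι | p.2 ≤ p.1 ∧ r p.1 p.2}
  have hU : #U = #L := card_nbij' Prod.swap Prod.swap
    (fun p hp => by simp_all [L, U, hr p.1 p.2]) (fun p hp => by simp_all [L, U, hr p.1 p.2])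
    (fun p _ => rfl) (fun p _ => rfl)
  have hunion : L ∪ U = ({p : ι × ι | r p.1 p.2} : Finset _) := by
    ext p
    simp only [L, U, mem_union, mem_filter_univ]
    rcases le_total p.1 p.2 with h | h <;> simp [h]
  have hinter : #(L ∩ U) = #{x | r x x} := card_nbij' Prod.fst (fun x => (x, x))
    (fun p hp => by
      rw [mem_coe, mem_inter, mem_filter_univ, mem_filter_univ] at hp
      simpa [le_antisymm hp.1.1 hp.2.1] using hp.1.2)
    (fun x hx => by simp_all [L, U])
    (fun p hp => by
      rw [mem_coe, mem_inter, mem_filter_univ, mem_filter_univ] at hp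
      exact Prod.ext rfl (le_antisymm hp.1.1 hp.2.1))
    (fun x _ => rfl)
  have := card_union_add_card_inter L U
  rw [hunion, hinter, hU] at this
  omega

theorem card_filter_mul_eq_le_sum_count_sq {k ι : Type*} [Field k] [DecidableEq k] [Fintype ι]
    {a : ι → k} (ha : ∀ x, a x ≠ 0) (μ0 : k) :
    #{p : ι × ι | a p.1 * a p.2 = μ0} ≤
      ∑ v ∈ (univ.val.map a).toFinset, (univ.val.map a).count v ^ 2 := by
  rcases eq_or_ne μ0 0 with rfl | hμ0
  · simp [ha]
  have hrow (x : ι) : #{y | a x * a y = μ0} = (univ.val.map a).count (μ0 / a x) := by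
    rw [Multiset.count_map_univ]
    congr 1
    ext y
    simp only [mem_filter_univ, eq_div_iff (ha x), mul_comm (a y)]
  calc #{p : ι × ι | a p.1 * a p.2 = μ0}
      = ∑ x, (univ.val.map a).count (μ0 / a x) := by
        simp only [card_filter, Fintype.sum_prod_type, ← hrow]
    _ = ((univ.val.map a).map fun v => (univ.val.map a).count (μ0 / v)).sum := by
        rw [Multiset.map_map]
        rfl
    _ = ∑ v ∈ (univ.val.map a).toFinset, (univ.val.map a).count v *
          (univ.val.map a).count (μ0 / v) := sum_multiset_map_count _ _
    _ ≤ _ := Multiset.sum_count_mul_count_comp_le _ fun v w h => inv_injective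
        (mul_left_cancel₀ hμ0 (by simpa only [div_eq_mul_inv] using h))

section EigenvaluePairs

variable {k ι : Type*} [Field k] [DecidableEq k] [Fintype ι] [LinearOrder ι] {a : ι → k}

theorem two_mul_card_pairs_le_sum_count_sq_add (ha : ∀ x, a x ≠ 0) (μ0 : k) :
    2 * #{p : ι × ι | p.1 ≤ p.2 ∧ a p.1 * a p.2 = μ0} ≤
      ∑ v ∈ (univ.val.map a).toFinset, (univ.val.map a).count v ^ 2 +
        #{x | a x * a x = μ0} := by
  rw [two_mul_card_filter_fst_le_snd (fun x y => a x * a y = μ0)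
    fun x y h => (mul_comm _ _).trans h]
  exact Nat.add_le_add_right (card_filter_mul_eq_le_sum_count_sq ha μ0) _

theorem two_mul_card_pairs_le (ha : ∀ x, a x ≠ 0)
    (hle : ∀ v, (univ.val.map a).count v + 2 ≤ Fintype.card ι) (μ0 : k) :
    2 * #{p : ι × ι | p.1 ≤ p.2 ∧ a p.1 * a p.2 = μ0} ≤
      (Fintype.card ι - 2) ^ 2 + 4 + Fintype.card ι := by
  have hcard : Multiset.card (univ.val.map a) = Fintype.card ι := by simp
  have hS := Multiset.sum_count_sq_le (A := univ.val.map a) (by rwa [hcard])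
  rw [hcard] at hS
  exact (two_mul_card_pairs_le_sum_count_sq_add ha μ0).trans
    (add_le_add hS (card_filter_le _ _))

theorem eq_one_of_two_mul_card_pairs_eq (ha : ∀ x, a x ≠ 0)
    (hle : ∀ v, (univ.val.map a).count v + 2 ≤ Fintype.card ι)
    (hinv : ∀ v, (univ.val.map a).count v⁻¹ = (univ.val.map a).count v)
    (hne : ∀ v, ∃ w ∈ univ.val.map a, w ≠ v) (h6 : 6 ≤ Fintype.card ι) {μ0 : k}
    (heq : 2 * #{p : ι × ι | p.1 ≤ p.2 ∧ a p.1 * a p.2 = μ0} =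
      (Fintype.card ι - 2) ^ 2 + 4 + Fintype.card ι) :
    μ0 = 1 ∧ ∃ ε : k, (ε = 1 ∨ ε = -1) ∧
      univ.val.map a = (Fintype.card ι - 2) • {ε} + 2 • {-ε} := by
  have hcard : Multiset.card (univ.val.map a) = Fintype.card ι := by simp
  have hS := Multiset.sum_count_sq_le (A := univ.val.map a) (by rwa [hcard])
  have hD := card_filter_le (univ : Finset ι) fun x => a x * a x = μ0
  have hX := two_mul_card_pairs_le_sum_count_sq_add ha μ0
  rw [hcard] at hS
  rw [card_univ] at hD
  have hsq : ∀ v ∈ univ.val.map a, v * v = μ0 := by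
    intro v hv
    obtain ⟨x, -, rfl⟩ := Multiset.mem_map.1 hv
    exact card_filter_eq_iff (p := fun x => a x * a x = μ0).1 (by rw [card_univ]; omega) x
      (mem_univ x)
  obtain ⟨ε, hε1, hA⟩ := Multiset.exists_eq_nsmul_add_nsmul_neg hinv hsq hne (by omega)
    (by rw [hcard]; omega)
  rw [hcard] at hA
  have hεA : ε ∈ univ.val.map a := by
    rw [hA]
    simp only [Multiset.mem_add, Multiset.mem_nsmul, Multiset.mem_singleton, and_true]
    exact .inl (by omega)
  exact ⟨(hsq ε hεA).symm.trans hε1, ε, mul_self_eq_one_iff.1 hε1, hA⟩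

end EigenvaluePairs

theorem stmt11_general {k : Type*} [Field k] (hk2 : (2 : k) ≠ 0)
    {W : Type*} [AddCommGroup W] [Module k W]
    (ℓ : ℕ) (hl : 2 ≤ ℓ)
    (B : LinearMap.BilinForm k W) (hBnd : B.Nondegenerate)
    (s : W →ₗ[k] W) (hs : ∀ v w, B (s v) (s w) = B v w)
    (hnoncentral : ∀ c : k, s ≠ c • LinearMap.id)
    (m : ℕ) (μ : Fin m → k) (n : Fin m → ℕ)
    (b : Module.Basis (Fin (2 * ℓ)) k W) (a : Fin (2 * ℓ) → k)
    (hb : ∀ x, s (b x) = a x • b x)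
    (hmult : Finset.univ.val.map a =
      ∑ i : Fin m, ((n i) • ({μ i} : Multiset k) + (n i) • ({(μ i)⁻¹} : Multiset k))) :
    ∀ μ0 : k,
      Module.finrank k
        ↥(Module.End.eigenspace (TensorProduct.map s s) μ0 ⊓ symSq k W) ≤
        2 * ℓ ^ 2 - 3 * ℓ + 4 ∧
      (3 ≤ ℓ → μ0 = μ0⁻¹ →
        Module.finrank k
          ↥(Module.End.eigenspace (TensorProduct.map s s) μ0 ⊓ symSq k W) =
          2 * ℓ ^ 2 - 3 * ℓ + 4 →
        μ0 = 1 ∧ ∃ ε : k, (ε = 1 ∨ ε = -1) ∧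
          Finset.univ.val.map a =
            (2 * ℓ - 2) • ({ε} : Multiset k) + 2 • ({-ε} : Multiset k)) := by
  classical
  intro μ0
  set M := ∑ i : Fin m, n i • ({μ i} : Multiset k)
  have hsplit : univ.val.map a = M + M.map Inv.inv := by
    rw [hmult, sum_add_distrib, ← Multiset.coe_mapAddMonoidHom, map_sum]
    simp [M, Multiset.map_nsmul]
  have hinv := Multiset.count_inv_of_eq_add_map_inv hsplit
  have ha (x : Fin (2 * ℓ)) : a x ≠ 0 := fun hx =>
    b.ne_zero x (hBnd.injective_of_isometry hs (by rw [hb, hx, zero_smul, map_zero]))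
  have hne (v : k) : ∃ w ∈ univ.val.map a, w ≠ v := by
    obtain ⟨x, hx⟩ := b.exists_apply_ne_of_ne_smul_id hb hnoncentral v
    exact ⟨a x, Multiset.mem_map_of_mem _ (mem_univ x), hx⟩
  have hN : Fintype.card (Fin (2 * ℓ)) = 2 * ℓ := Fintype.card_fin _
  have hcard : Multiset.card (univ.val.map a) = Fintype.card (Fin (2 * ℓ)) := by simp
  have hle := Multiset.count_add_two_le_card hinv
    (fun _ => Multiset.even_count_of_eq_add_map_inv hsplit) hne (by omega)
  rw [hcard] at hle
  have hbound := Nat.sq_two_mul_sub_two_add_four_add_two_mul hl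
  rw [finrank_eigenspace_map_inf_symSq hk2 b s a hb μ0]
  have hT := two_mul_card_pairs_le ha hle μ0
  rw [hN, hbound] at hT
  refine ⟨by omega, fun hl3 _ heq => ?_⟩
  simpa only [hN] using eq_one_of_two_mul_card_pairs_eq ha hle hinv hne (by omega)
    (by rw [hN, hbound, heq])

/-- Let `s = diag(μ₁·I_{n₁},…,μ_m·I_{n_m}, μ_m^{-1}·I_{n_m},…,μ₁^{-1}·I_{n₁})`
be a noncentral element of `Sp_{2ℓ}(k)` (`ℓ ≥ 2`, `k` algebraically closed of
characteristic `≠ 2`), with `μ_i ≠ μ_j^{±1}` for `i < j` and `Σ n_i = ℓ`.  Then every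
eigenspace of `s` on `Sym²(k^{2ℓ}) = L(2ω₁)` has dimension at most `2ℓ² − 3ℓ + 4`, and
equality for an eigenvalue `μ₀` with `μ₀ = μ₀^{-1}` forces (for `ℓ ≥ 3`)
`s = ±diag(1,…,1,−1,−1,1,…,1)` up to conjugation, with eigenvalue `1`. -/
theorem stmt11 {k : Type*} [Field k] [IsAlgClosed k] (hk2 : (2 : k) ≠ 0)
    {W : Type*} [AddCommGroup W] [Module k W] [FiniteDimensional k W]
    (ℓ : ℕ) (hl : 2 ≤ ℓ) (hW : Module.finrank k W = 2 * ℓ)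
    (B : LinearMap.BilinForm k W) (hBnd : B.Nondegenerate)
    (hBalt : ∀ v w : W, B v w = -B w v)
    (s : W →ₗ[k] W) (hs : ∀ v w, B (s v) (s w) = B v w)
    (hnoncentral : ∀ c : k, s ≠ c • LinearMap.id)
    (m : ℕ) (μ : Fin m → k) (n : Fin m → ℕ)
    (hμ : ∀ i j : Fin m, i < j → μ i ≠ μ j ∧ μ i ≠ (μ j)⁻¹)
    (hn : ∀ i, 1 ≤ n i) (hsum : ∑ i, n i = ℓ)
    (b : Module.Basis (Fin (2 * ℓ)) k W) (a : Fin (2 * ℓ) → k)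
    (hb : ∀ x, s (b x) = a x • b x)
    (hmult : Finset.univ.val.map a =
      ∑ i : Fin m, ((n i) • ({μ i} : Multiset k) + (n i) • ({(μ i)⁻¹} : Multiset k))) :
    ∀ μ0 : k,
      Module.finrank k
        ↥(Module.End.eigenspace (TensorProduct.map s s) μ0 ⊓ symSq k W) ≤
        2 * ℓ ^ 2 - 3 * ℓ + 4 ∧
      (3 ≤ ℓ → μ0 = μ0⁻¹ →
        Module.finrank k
          ↥(Module.End.eigenspace (TensorProduct.map s s) μ0 ⊓ symSq k W) =
          2 * ℓ ^ 2 - 3 * ℓ + 4 →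
        μ0 = 1 ∧ ∃ ε : k, (ε = 1 ∨ ε = -1) ∧
          Finset.univ.val.map a =
            (2 * ℓ - 2) • ({ε} : Multiset k) + 2 • ({-ε} : Multiset k)) :=
  stmt11_general hk2 ℓ hl B hBnd s hs hnoncentral m μ n b a hb hmult
end
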